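/- arXiv:1503.02815 — 3 statements merged into one kernel-verified Lean document; each statement's English description precedes it below -/
import Mathlib

section
/- Let X and Y be independent Gamma(N,1) random variables, N a positive integer. Then for z > 0, P(XY < z) = 1 - (2/(N-1)!) Σ_{p=0}^{N-1} (√z)^{N+p} K_{N-p}(2√z)/p!, where K_ν is the modified Bessel function of the second kind. -/
open Real Set MeasureTheory ProbabilityTheory

/-- The modified Bessel function of the second kind,
`K_ν(x) = ∫₀^∞ e^{-x cosh t} cosh(νt) dt`. -/
noncomputable def besselK (ν x : ℝ) : ℝ :=
  ∫ t in Ioi (0:ℝ), Real.exp (-x * Real.cosh t) * Real.cosh (ν * t)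

/-!
Conditioning on `X = x`, the Erlang tail `P(Y ≥ t) = e^{-t} ∑_{p<N} t^p / p!` gives
`P(XY ≥ z) = ∫₀^∞ f_N(x) e^{-z/x} ∑_{p<N} (z/x)^p / p! dx`, a combination of the
integrals `∫₀^∞ x^k e^{-(x + z/x)} dx`. The substitution `x = √z e^t` turns `x + z/x` into
`2√z cosh t`, so each of them equals `2 (√z)^{k+1} K_{k+1}(2√z)`.
-/

open Filter Topology
open scoped ENNReal Nat

lemma hasDerivAt_exp_neg_mul_sum_pow_div_factorial (n : ℕ) (x : ℝ) :
    HasDerivAt (fun x : ℝ => exp (-x) * ∑ p ∈ Finset.range (n + 1), x ^ p / p !)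
      (-(x ^ n * exp (-x) / n !)) x := by
  have hsum : HasDerivAt (fun x : ℝ => ∑ p ∈ Finset.range (n + 1), x ^ p / p !)
      (∑ p ∈ Finset.range n, x ^ p / p !) x := by
    refine (HasDerivAt.fun_sum fun p _ =>
      (hasDerivAt_pow p x).div_const (p ! : ℝ)).congr_deriv ?_
    rw [Finset.sum_range_succ']
    simp only [CharP.cast_eq_zero, zero_mul, zero_div, add_zero, Nat.add_sub_cancel,
      Nat.factorial_succ, Nat.cast_mul, Nat.cast_succ]
    refine Finset.sum_congr rfl fun p _ => ?_
    field_simp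
  have hexp : HasDerivAt (fun x : ℝ => exp (-x)) (-exp (-x)) x := by
    simpa using (hasDerivAt_neg x).exp
  refine (hexp.mul hsum).congr_deriv ?_
  rw [Finset.sum_range_succ]
  ring

lemma tendsto_exp_neg_mul_sum_pow_div_factorial (n : ℕ) :
    Tendsto (fun x : ℝ => exp (-x) * ∑ p ∈ Finset.range (n + 1), x ^ p / p !) atTop (𝓝 0) := by
  simp_rw [Finset.mul_sum]
  simpa using tendsto_finsetSum (Finset.range (n + 1)) fun p _ =>
    ((tendsto_pow_mul_exp_neg_atTop_nhds_zero p).div_const (p ! : ℝ)).congr fun x => by ring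

lemma integral_Ioi_pow_mul_exp_neg_div_factorial (n : ℕ) {t : ℝ} (ht : 0 ≤ t) :
    ∫ x in Ioi t, x ^ n * exp (-x) / n ! =
      exp (-t) * ∑ p ∈ Finset.range (n + 1), t ^ p / p ! := by
  have := integral_Ioi_of_hasDerivAt_of_nonneg
    (hasDerivAt_exp_neg_mul_sum_pow_div_factorial n t).neg.continuousAt.continuousWithinAt
    (fun x _ => (hasDerivAt_exp_neg_mul_sum_pow_div_factorial n x).neg)
    (fun x hx => by simp only [neg_neg]; have := ht.trans (le_of_lt hx); positivity)
    (tendsto_exp_neg_mul_sum_pow_div_factorial n).neg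
  simpa using this

lemma integrableOn_Ioi_pow_mul_exp_neg_div_factorial (n : ℕ) {t : ℝ} (ht : 0 ≤ t) :
    IntegrableOn (fun x : ℝ => x ^ n * exp (-x) / n !) (Ioi t) :=
  integrableOn_Ioi_deriv_of_nonneg
    (hasDerivAt_exp_neg_mul_sum_pow_div_factorial n t).neg.continuousAt.continuousWithinAt
    (fun x _ => (hasDerivAt_exp_neg_mul_sum_pow_div_factorial n x).neg.congr_deriv (neg_neg _))
    (fun x hx => by have := ht.trans (le_of_lt hx); positivity)
    (tendsto_exp_neg_mul_sum_pow_div_factorial n).neg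

lemma gammaPDFReal_natCast_succ_one (n : ℕ) {x : ℝ} (hx : 0 ≤ x) :
    gammaPDFReal ((n + 1 : ℕ) : ℝ) 1 x = x ^ n * exp (-x) / n ! := by
  rw [gammaPDFReal, if_pos hx, Nat.cast_succ, Real.Gamma_nat_eq_factorial, add_sub_cancel_right,
    Real.rpow_natCast, Real.one_rpow, one_mul, one_div, div_eq_mul_inv]
  ring

lemma gammaMeasure_Iic_zero (a r : ℝ) : gammaMeasure a r (Iic 0) = 0 := by
  rw [gammaMeasure, withDensity_apply _ measurableSet_Iic, ← restrict_Iio_eq_restrict_Iic,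
    lintegral_gammaPDF_of_nonpos le_rfl]

lemma lintegral_gammaMeasure (a r : ℝ) {g : ℝ → ℝ≥0∞} (hg : Measurable g) :
    ∫⁻ x, g x ∂gammaMeasure a r = ∫⁻ x in Ioi 0, gammaPDF a r x * g x := by
  have hpos : ∀ᵐ x ∂gammaMeasure a r, x ∈ Ioi 0 := by
    rw [ae_iff]
    simp only [mem_Ioi, not_lt]
    exact gammaMeasure_Iic_zero a r
  rw [← Measure.restrict_eq_self_of_ae_mem hpos, gammaMeasure,
    setLIntegral_withDensity_eq_setLIntegral_mul _
      (f := gammaPDF a r) (measurable_gammaPDFReal a r).ennreal_ofReal hg measurableSet_Ioi]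
  rfl

lemma gammaMeasure_Ici (n : ℕ) {t : ℝ} (ht : 0 ≤ t) :
    gammaMeasure ((n + 1 : ℕ) : ℝ) 1 (Ici t) =
      ENNReal.ofReal (exp (-t) * ∑ p ∈ Finset.range (n + 1), t ^ p / p !) := by
  rw [gammaMeasure, withDensity_apply _ measurableSet_Ici, ← restrict_Ioi_eq_restrict_Ici,
    ← integral_Ioi_pow_mul_exp_neg_div_factorial n ht,
    ofReal_integral_eq_lintegral_ofReal (integrableOn_Ioi_pow_mul_exp_neg_div_factorial n ht)]
  · refine setLIntegral_congr_fun measurableSet_Ioi fun x hx => ?_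
    rw [gammaPDF, gammaPDFReal_natCast_succ_one n (ht.trans (le_of_lt hx))]
  · filter_upwards [ae_restrict_mem measurableSet_Ioi] with x hx
    have := ht.trans (le_of_lt hx)
    positivity

lemma besselK_nonneg (ν x : ℝ) : 0 ≤ besselK ν x :=
  setIntegral_nonneg measurableSet_Ioi fun _ _ => by positivity

lemma integral_exp_neg_mul_cosh_mul_exp {a ν : ℝ}
    (h : Integrable fun t => exp (-a * cosh t) * exp (ν * t)) :
    ∫ t, exp (-a * cosh t) * exp (ν * t) = 2 * besselK ν a := by
  -- against the even weight only the even part `cosh (ν t)` of `exp (ν t)` survives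
  set f := fun t => exp (-a * cosh t) * exp (ν * t)
  have hsymm : ∀ t, exp (-a * cosh |t|) * cosh (ν * |t|) = (f t + f (-t)) / 2 := by
    intro t
    have : cosh (ν * |t|) = cosh (ν * t) := by rcases abs_choice t with h | h <;> simp [h]
    rw [cosh_abs, this, cosh_eq (ν * t)]
    simp only [f, cosh_neg, mul_neg]
    ring
  rw [besselK, ← integral_comp_abs (f := fun t => exp (-a * cosh t) * cosh (ν * t)),
    integral_congr_ae (ae_of_all _ hsymm), integral_div, integral_add h h.comp_neg,
    integral_neg_eq_self]
  ring

lemma range_const_mul_exp {c : ℝ} (hc : 0 < c) : range (fun t => c * exp t) = Ioi 0 := by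
  rw [range_comp' (c * ·) exp, range_exp, image_const_mul_Ioi_zero hc]

section Substitution

variable {E : Type*} [NormedAddCommGroup E] [NormedSpace ℝ E] {c : ℝ}

lemma integral_comp_const_mul_exp (hc : 0 < c) (g : ℝ → E) :
    ∫ t, (c * exp t) • g (c * exp t) = ∫ x in Ioi 0, g x := by
  have := integral_image_eq_integral_abs_deriv_smul MeasurableSet.univ
    (fun t _ => ((hasDerivAt_exp t).const_mul c).hasDerivWithinAt)
    (fun s _ t _ hst => exp_injective (mul_left_cancel₀ hc.ne' hst)) g
  rw [image_univ, range_const_mul_exp hc, Measure.restrict_univ] at this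
  rw [this]
  simp_rw [abs_of_pos (mul_pos hc (exp_pos _))]

lemma integrable_comp_const_mul_exp_iff (hc : 0 < c) (g : ℝ → E) :
    Integrable (fun t => (c * exp t) • g (c * exp t)) ↔ IntegrableOn g (Ioi 0) := by
  have := integrableOn_image_iff_integrableOn_abs_deriv_smul MeasurableSet.univ
    (fun t _ => ((hasDerivAt_exp t).const_mul c).hasDerivWithinAt)
    (fun s _ t _ hst => exp_injective (mul_left_cancel₀ hc.ne' hst)) g
  rw [image_univ, range_const_mul_exp hc, integrableOn_univ] at this
  rw [this]
  simp_rw [abs_of_pos (mul_pos hc (exp_pos _))]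

end Substitution

lemma integrableOn_pow_mul_exp_neg_add_div (k : ℕ) {w : ℝ} (hw : 0 ≤ w) :
    IntegrableOn (fun x : ℝ => x ^ k * exp (-(x + w / x))) (Ioi 0) := by
  refine ((integrableOn_Ioi_pow_mul_exp_neg_div_factorial k le_rfl).mul_const (k ! : ℝ)).mono'
    (by fun_prop) ?_
  filter_upwards [ae_restrict_mem measurableSet_Ioi] with x (hx : 0 < x)
  rw [div_mul_cancel₀ _ (by positivity), norm_of_nonneg (by positivity)]
  gcongr
  linarith [div_nonneg hw hx.le]

lemma integral_Ioi_pow_mul_exp_neg_add_sq_div (k : ℕ) {c : ℝ} (hc : 0 < c) :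
    ∫ x in Ioi 0, x ^ k * exp (-(x + c ^ 2 / x)) = 2 * c ^ (k + 1) * besselK (k + 1) (2 * c) := by
  have hsub : ∀ t, (c * exp t) • ((c * exp t) ^ k * exp (-(c * exp t + c ^ 2 / (c * exp t)))) =
      c ^ (k + 1) * (exp (-(2 * c) * cosh t) * exp ((k + 1) * t)) := by
    intro t
    have hcosh : -(c * exp t + c ^ 2 / (c * exp t)) = -(2 * c) * cosh t := by
      rw [cosh_eq, exp_neg]
      field_simp
    rw [smul_eq_mul, hcosh, add_mul, one_mul, exp_add, mul_pow, ← exp_nat_mul]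
    ring
  have hint : Integrable fun t => exp (-(2 * c) * cosh t) * exp ((k + 1) * t) := by
    have := (integrable_comp_const_mul_exp_iff hc _).2
      (integrableOn_pow_mul_exp_neg_add_div k (sq_nonneg c))
    simp_rw [hsub] at this
    exact (integrable_const_mul_iff (pow_pos hc _).ne'.isUnit _).1 this
  rw [← integral_comp_const_mul_exp hc]
  simp_rw [hsub]
  rw [integral_const_mul, integral_exp_neg_mul_cosh_mul_exp hint]
  ring

lemma ProbabilityTheory.IndepFun.measure_preimage_prodMk {Ω β β' : Type*} [MeasurableSpace Ω]
    [MeasurableSpace β] [MeasurableSpace β'] {μ : Measure Ω} [IsFiniteMeasure μ]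
    {X : Ω → β} {Y : Ω → β'} (hXY : IndepFun X Y μ) (hX : AEMeasurable X μ)
    (hY : AEMeasurable Y μ) {s : Set (β × β')} (hs : MeasurableSet s) :
    μ ((fun ω => (X ω, Y ω)) ⁻¹' s) = (μ.map X).prod (μ.map Y) s := by
  rw [← hXY.map_prod_eq_prod_map_map hX hY, Measure.map_apply_of_aemeasurable (hX.prodMk hY) hs]

lemma gammaPDF_mul_gammaMeasure_Ici_div (n : ℕ) {z x : ℝ} (hz : 0 ≤ z) (hx : 0 < x) :
    gammaPDF ((n + 1 : ℕ) : ℝ) 1 x * gammaMeasure ((n + 1 : ℕ) : ℝ) 1 (Ici (z / x)) =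
      ENNReal.ofReal (∑ p ∈ Finset.range (n + 1),
        z ^ p / (p ! * n !) * (x ^ (n - p) * exp (-(x + z / x)))) := by
  rw [gammaPDF, gammaPDFReal_natCast_succ_one n hx.le, gammaMeasure_Ici n (by positivity),
    ← ENNReal.ofReal_mul (by positivity), Finset.mul_sum, Finset.mul_sum]
  congr 1
  refine Finset.sum_congr rfl fun p hp => ?_
  rw [pow_sub₀ x hx.ne' (Nat.lt_succ_iff.mp (Finset.mem_range.mp hp)), neg_add, exp_add, div_pow]
  field_simp

lemma gammaMeasure_prod_setOf_sq_le_mul (n : ℕ) {c : ℝ} (hc : 0 < c) :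
    (gammaMeasure ((n + 1 : ℕ) : ℝ) 1).prod (gammaMeasure ((n + 1 : ℕ) : ℝ) 1)
        {q : ℝ × ℝ | c ^ 2 ≤ q.1 * q.2} =
      ENNReal.ofReal (2 / n ! * ∑ p ∈ Finset.range (n + 1),
        c ^ (n + 1 + p) * besselK (((n + 1 : ℕ) : ℝ) - p) (2 * c) / p !) := by
  have := isProbabilityMeasure_gammaMeasure (a := ((n + 1 : ℕ) : ℝ)) (by positivity) one_pos
  have hs : MeasurableSet {q : ℝ × ℝ | c ^ 2 ≤ q.1 * q.2} :=
    measurableSet_le measurable_const (measurable_fst.mul measurable_snd)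
  have hslice : ∀ x ∈ Ioi (0 : ℝ),
      Prod.mk x ⁻¹' {q : ℝ × ℝ | c ^ 2 ≤ q.1 * q.2} = Ici (c ^ 2 / x) := by
    intro x (hx : 0 < x)
    ext y
    simp [div_le_iff₀' hx]
  have hterm : ∀ p ∈ Finset.range (n + 1),
      IntegrableOn
        (fun x => (c ^ 2) ^ p / (p ! * n !) * (x ^ (n - p) * exp (-(x + c ^ 2 / x)))) (Ioi 0) :=
    fun p _ => (integrableOn_pow_mul_exp_neg_add_div (n - p) (sq_nonneg c)).const_mul _
  rw [Measure.prod_apply hs, lintegral_gammaMeasure _ _ (measurable_measure_prodMk_left hs),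
    setLIntegral_congr_fun measurableSet_Ioi fun x hx => by
      rw [hslice x hx, gammaPDF_mul_gammaMeasure_Ici_div n (sq_nonneg c) hx],
    ← ofReal_integral_eq_lintegral_ofReal (integrable_finsetSum _ hterm),
    integral_finsetSum _ hterm, Finset.mul_sum]
  · congr 1
    refine Finset.sum_congr rfl fun p hp => ?_
    have hpn : p ≤ n := Nat.lt_succ_iff.mp (Finset.mem_range.mp hp)
    rw [integral_const_mul, integral_Ioi_pow_mul_exp_neg_add_sq_div _ hc, Nat.cast_sub hpn,
      Nat.cast_succ, ← pow_mul, show n + 1 + p = 2 * p + (n - p + 1) by omega,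
      show (n : ℝ) - p + 1 = n + 1 - p by ring]
    field_simp
    ring
  · filter_upwards [ae_restrict_mem measurableSet_Ioi] with x (hx : 0 < x)
    exact Finset.sum_nonneg fun p _ => by positivity

/-- If `X, Y` are independent `Gamma(N,1)` random variables, then for `z > 0`,
`P(XY < z) = 1 - (2/(N-1)!) Σ_{p=0}^{N-1} (√z)^{N+p} K_{N-p}(2√z)/p!`. -/
theorem stmt9 {α : Type*} [MeasurableSpace α] (μ : Measure α) [IsProbabilityMeasure μ]
    (N : ℕ) (hN : 1 ≤ N) (X Y : α → ℝ) (hXm : Measurable X) (hYm : Measurable Y)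
    (hX : μ.map X = gammaMeasure N 1) (hY : μ.map Y = gammaMeasure N 1)
    (hXY : IndepFun X Y μ) (z : ℝ) (hz : 0 < z) :
    μ {ω | X ω * Y ω < z} =
      ENNReal.ofReal (1 - 2 / (Nat.factorial (N - 1) : ℝ) *
        ∑ p ∈ Finset.range N,
          (Real.sqrt z) ^ (N + p) * besselK ((N : ℝ) - (p : ℝ)) (2 * Real.sqrt z) /
            (Nat.factorial p : ℝ)) := by
  obtain ⟨n, rfl⟩ : ∃ n, N = n + 1 := ⟨N - 1, by omega⟩
  have hs : MeasurableSet {q : ℝ × ℝ | z ≤ q.1 * q.2} :=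
    measurableSet_le measurable_const (measurable_fst.mul measurable_snd)
  have hlaw := hXY.measure_preimage_prodMk hXm.aemeasurable hYm.aemeasurable hs
  rw [hX, hY, ← sq_sqrt hz.le, gammaMeasure_prod_setOf_sq_le_mul n (sqrt_pos.2 hz),
    sq_sqrt hz.le] at hlaw
  have hcompl : {ω | X ω * Y ω < z} = ((fun ω => (X ω, Y ω)) ⁻¹' {q | z ≤ q.1 * q.2})ᶜ := by
    ext ω
    simp
  rw [hcompl, prob_compl_eq_one_sub ((hXm.prodMk hYm) hs), hlaw, Nat.add_sub_cancel,
    ← ENNReal.ofReal_one, ← ENNReal.ofReal_sub]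
  exact mul_nonneg (by positivity) <| Finset.sum_nonneg fun p _ =>
    div_nonneg (mul_nonneg (by positivity) (besselK_nonneg _ _)) (by positivity)
end

section
/- For any positive integer N and any b > 0, ∫₀^∞ z^{N-1} ln(z) K₀(2√(bz)) dz = ((N-1)!)²/(2 b^N) · (2ψ(N) - ln b), where K₀ is the modified Bessel function of the second kind of order 0 and ψ is the digamma function. -/
open Real Set MeasureTheory

/-- The digamma function at a positive integer: `ψ(N) = -γ_E + Σ_{k=1}^{N-1} 1/k`. -/
noncomputable def digammaNat (N : ℕ) : ℝ :=
  -Real.eulerMascheroniConstant + ∑ k ∈ Finset.range (N - 1), (1 : ℝ) / (k + 1)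

/-!
Write `n = N - 1`. Substituting `u = √x eᵗ` turns the defining integral of `K₀` into
`K₀(2√x) = ½ ∫₀^∞ e^{-u - x/u} du / u`. After exchanging the order of integration
(Fubini, with `|log z| ≤ 2 (z^{1/2} + z^{-1/2})` supplying a Gamma-type majorant), the inner
integral is `∫₀^∞ z^n log z e^{-(b/u) z} dz = n! (u/b)^{n+1} (ψ(n+1) - log (b/u))`, obtained by
rescaling `Γ'(n+1) = n! ψ(n+1)`. The outer integral is then a combination of `Γ(n+1)` and
`Γ'(n+1)`.
-/

lemma digammaNat_succ (n : ℕ) : digammaNat (n + 1) = -eulerMascheroniConstant + harmonic n := by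
  simp [digammaNat, harmonic, one_div]

lemma integrableOn_rpow_mul_exp_neg_mul {a c : ℝ} (ha : -1 < a) (hc : 0 < c) :
    IntegrableOn (fun t : ℝ => t ^ a * exp (-(c * t))) (Ioi 0) := by
  simpa [rpow_one, neg_mul] using integrableOn_rpow_mul_exp_neg_mul_rpow ha one_pos hc

lemma abs_log_le_rpow_add_rpow {t : ℝ} (ht : 0 < t) :
    |log t| ≤ 2 * t ^ (1 / 2 : ℝ) + 2 * t ^ (-(1 / 2) : ℝ) := by
  have hpos := log_le_rpow_div ht.le one_half_pos
  have hneg := log_le_rpow_div (inv_pos.2 ht).le one_half_pos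
  rw [log_inv, inv_rpow ht.le, ← rpow_neg ht.le] at hneg
  have := rpow_nonneg ht.le (1 / 2 : ℝ)
  have := rpow_nonneg ht.le (-(1 / 2) : ℝ)
  exact abs_le.2 ⟨by linarith, by linarith⟩

lemma abs_pow_mul_log_le (n : ℕ) {t : ℝ} (ht : 0 < t) :
    |t ^ n * log t| ≤ 2 * t ^ ((n : ℝ) + 1 / 2) + 2 * t ^ ((n : ℝ) - 1 / 2) := by
  rw [abs_mul, abs_of_pos (pow_pos ht n), sub_eq_add_neg, rpow_add ht, rpow_add ht, rpow_natCast]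
  nlinarith [abs_log_le_rpow_add_rpow ht, pow_pos ht n]

lemma integrableOn_pow_mul_exp_neg (n : ℕ) :
    IntegrableOn (fun t : ℝ => t ^ n * exp (-t)) (Ioi 0) := by
  simpa [rpow_natCast] using
    integrableOn_rpow_mul_exp_neg_mul (a := n) (by linarith [n.cast_nonneg (α := ℝ)]) one_pos

lemma integrableOn_pow_mul_log_mul_exp_neg (n : ℕ) :
    IntegrableOn (fun t : ℝ => t ^ n * log t * exp (-t)) (Ioi 0) := by
  have hn : (0 : ℝ) ≤ n := n.cast_nonneg
  have hdom :=
    ((integrableOn_rpow_mul_exp_neg_mul (a := n + 1 / 2) (by linarith) one_pos).const_mul 2).add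
      ((integrableOn_rpow_mul_exp_neg_mul (a := n - 1 / 2) (by linarith) one_pos).const_mul 2)
  simp only [one_mul] at hdom
  refine hdom.mono' (by fun_prop) ?_
  filter_upwards [ae_restrict_mem measurableSet_Ioi] with t (ht : 0 < t)
  have := mul_le_mul_of_nonneg_right (abs_pow_mul_log_le n ht) (exp_pos (-t)).le
  rw [Pi.add_apply, norm_mul, norm_eq_abs, norm_eq_abs, abs_of_pos (exp_pos _)]
  linarith

open scoped Nat in
lemma integral_pow_mul_exp_neg (n : ℕ) : ∫ t in Ioi 0, t ^ n * exp (-t) = n ! := by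
  have := integral_rpow_mul_exp_neg_mul_Ioi (a := n + 1) (by positivity) one_pos
  simpa [← Gamma_nat_eq_factorial, rpow_natCast] using this

open scoped Nat in
lemma integral_pow_mul_log_mul_exp_neg (n : ℕ) :
    ∫ t in Ioi 0, t ^ n * log t * exp (-t) = n ! * digammaNat (n + 1) := by
  have hs : 0 < ((n : ℂ) + 1).re := by simp; positivity
  have hGamma : Complex.GammaIntegral =ᶠ[nhds ((n : ℂ) + 1)] Complex.Gamma := by
    filter_upwards [(isOpen_lt continuous_const Complex.continuous_re).mem_nhds hs] with s hs
    exact (Complex.Gamma_eq_integral hs).symm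
  have hderiv := (Complex.hasDerivAt_GammaIntegral hs).unique
    ((Complex.hasDerivAt_Gamma_nat n).congr_of_eventuallyEq hGamma)
  rw [digammaNat_succ]
  apply Complex.ofReal_injective
  rw [← integral_complex_ofReal]
  push_cast
  rw [← hderiv]
  refine setIntegral_congr_fun measurableSet_Ioi fun t _ => ?_
  rw [add_sub_cancel_right, Complex.cpow_natCast, Complex.ofReal_exp, Complex.ofReal_neg, mul_assoc]

open scoped Nat in
lemma integral_pow_mul_log_mul_exp_neg_mul (n : ℕ) {c : ℝ} (hc : 0 < c) :
    ∫ z in Ioi 0, z ^ n * log z * exp (-(c * z)) =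
      n ! / c ^ (n + 1) * (digammaNat (n + 1) - log c) := by
  have hsubst : ∀ z ∈ Ioi (0 : ℝ), z ^ n * log z * exp (-(c * z)) = (c ^ n)⁻¹ *
      ((c * z) ^ n * log (c * z) * exp (-(c * z)) - log c * ((c * z) ^ n * exp (-(c * z)))) := by
    intro z (hz : 0 < z)
    rw [log_mul hc.ne' hz.ne', mul_pow]
    field_simp
    ring
  rw [setIntegral_congr_fun measurableSet_Ioi hsubst, integral_const_mul,
    integral_comp_mul_left_Ioi (fun t => t ^ n * log t * exp (-t) - log c * (t ^ n * exp (-t))) 0 hc,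
    mul_zero, smul_eq_mul, integral_sub (integrableOn_pow_mul_log_mul_exp_neg n)
      ((integrableOn_pow_mul_exp_neg n).const_mul _), integral_const_mul,
    integral_pow_mul_log_mul_exp_neg, integral_pow_mul_exp_neg]
  field_simp
  ring

lemma image_univ_sqrt_mul_exp {x : ℝ} (hx : 0 < x) :
    (fun t => √x * exp t) '' univ = Ioi 0 := by
  rw [image_univ, show (fun t => √x * exp t) = (√x * ·) ∘ exp from rfl, range_comp, range_exp,
    image_mul_left_Ioi (sqrt_pos.2 hx), mul_zero]

lemma abs_sqrt_mul_exp_mul_exp_neg_sub_div_div {x : ℝ} (hx : 0 < x) (t : ℝ) :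
    |√x * exp t| * (exp (-(√x * exp t) - x / (√x * exp t)) / (√x * exp t)) =
      exp (-(2 * √x) * cosh t) := by
  have hs : 0 < √x := sqrt_pos.2 hx
  have hdiv : x / (√x * exp t) = √x * exp (-t) := by
    rw [exp_neg, div_mul_eq_div_div, div_sqrt, div_eq_mul_inv]
  rw [abs_of_pos (by positivity), mul_div_cancel₀ _ (by positivity), hdiv, cosh_eq]
  ring_nf

lemma integral_exp_neg_sub_div_div_eq_besselK {x : ℝ} (hx : 0 < x) :
    ∫ u in Ioi 0, exp (-u - x / u) / u = 2 * besselK 0 (2 * √x) := by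
  rw [← image_univ_sqrt_mul_exp hx, integral_image_eq_integral_abs_deriv_smul MeasurableSet.univ
    (fun t _ => ((hasDerivAt_exp t).const_mul √x).hasDerivWithinAt)
    (fun s _ t _ h => exp_injective (mul_left_cancel₀ (sqrt_pos.2 hx).ne' h))]
  simp only [Measure.restrict_univ, smul_eq_mul, abs_sqrt_mul_exp_mul_exp_neg_sub_div_div hx,
    besselK, zero_mul, cosh_zero, mul_one]
  rw [← integral_comp_abs]
  simp only [cosh_abs]

lemma exp_neg_sub_div_div_eq (b z u : ℝ) :
    exp (-u - b * z / u) / u = exp (-u) / u * exp (-(b / u * z)) := by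
  rw [mul_div_right_comm, sub_eq_add_neg, exp_add]
  ring

lemma integral_rpow_mul_exp_neg_sub_div_div {a b u : ℝ} (ha : -1 < a) (hb : 0 < b) (hu : 0 < u) :
    ∫ z in Ioi 0, z ^ a * (exp (-u - b * z / u) / u) =
      Gamma (a + 1) / b ^ (a + 1) * (u ^ a * exp (-u)) := by
  simp_rw [exp_neg_sub_div_div_eq, mul_left_comm _ (exp (-u) / u)]
  rw [integral_const_mul]
  have := integral_rpow_mul_exp_neg_mul_Ioi (a := a + 1) (by linarith) (div_pos hb hu)
  rw [add_sub_cancel_right] at this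
  rw [this, one_div_div, div_rpow hu.le hb.le, rpow_add_one hu.ne']
  field_simp

lemma integrable_rpow_mul_exp_neg_sub_div_div {a b : ℝ} (ha : -1 < a) (hb : 0 < b) :
    Integrable (fun p : ℝ × ℝ => p.1 ^ a * (exp (-p.2 - b * p.1 / p.2) / p.2))
      ((volume.restrict (Ioi 0)).prod (volume.restrict (Ioi 0))) := by
  rw [integrable_prod_iff' (by fun_prop)]
  constructor
  · filter_upwards [ae_restrict_mem measurableSet_Ioi] with u (hu : 0 < u)
    simp_rw [exp_neg_sub_div_div_eq, mul_left_comm _ (exp (-u) / u)]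
    exact (integrableOn_rpow_mul_exp_neg_mul ha (div_pos hb hu)).const_mul _
  · refine (((integrableOn_rpow_mul_exp_neg_mul ha one_pos).const_mul
      (Gamma (a + 1) / b ^ (a + 1))).congr ?_)
    filter_upwards [ae_restrict_mem measurableSet_Ioi] with u (hu : 0 < u)
    rw [one_mul, ← integral_rpow_mul_exp_neg_sub_div_div ha hb hu]
    refine setIntegral_congr_fun measurableSet_Ioi fun z (hz : 0 < z) => ?_
    rw [norm_of_nonneg (by positivity)]

lemma integrable_pow_mul_log_mul_exp_neg_sub_div_div (n : ℕ) {b : ℝ} (hb : 0 < b) :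
    Integrable (fun p : ℝ × ℝ => p.1 ^ n * log p.1 * (exp (-p.2 - b * p.1 / p.2) / p.2))
      ((volume.restrict (Ioi 0)).prod (volume.restrict (Ioi 0))) := by
  have hn : (0 : ℝ) ≤ n := n.cast_nonneg
  have hdom :=
    ((integrable_rpow_mul_exp_neg_sub_div_div (a := n + 1 / 2) (by linarith) hb).const_mul 2).add
      ((integrable_rpow_mul_exp_neg_sub_div_div (a := n - 1 / 2) (by linarith) hb).const_mul 2)
  refine hdom.mono' (by fun_prop) ?_
  rw [Measure.prod_restrict, ae_restrict_iff' (measurableSet_Ioi.prod measurableSet_Ioi)]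
  filter_upwards with ⟨z, u⟩ ⟨(hz : 0 < z), (hu : 0 < u)⟩
  have := mul_le_mul_of_nonneg_right (abs_pow_mul_log_le n hz)
    (by positivity : 0 ≤ exp (-u - b * z / u) / u)
  rw [Pi.add_apply, norm_mul, norm_eq_abs, norm_of_nonneg (by positivity)]
  linarith

/-- `∫₀^∞ z^{N-1} ln z K₀(2√(bz)) dz = ((N-1)!)²/(2b^N) · (2ψ(N) - ln b)`. -/
theorem stmt10 (N : ℕ) (hN : 1 ≤ N) (b : ℝ) (hb : 0 < b) :
    ∫ z in Ioi (0:ℝ), z ^ (N - 1) * Real.log z * besselK 0 (2 * Real.sqrt (b * z)) =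
      ((Nat.factorial (N - 1) : ℝ)) ^ 2 / (2 * b ^ N) * (2 * digammaNat N - Real.log b) := by
  obtain ⟨n, rfl⟩ := Nat.exists_eq_add_of_le' hN
  rw [Nat.add_sub_cancel]
  have hbessel : ∀ z ∈ Ioi (0 : ℝ), z ^ n * log z * besselK 0 (2 * √(b * z)) =
      1 / 2 * ∫ u in Ioi 0, z ^ n * log z * (exp (-u - b * z / u) / u) := by
    intro z (hz : 0 < z)
    rw [integral_const_mul, integral_exp_neg_sub_div_div_eq_besselK (mul_pos hb hz)]
    ring
  have hinner : ∀ u ∈ Ioi (0 : ℝ), ∫ z in Ioi 0, z ^ n * log z * (exp (-u - b * z / u) / u) =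
      n.factorial / b ^ (n + 1) * ((digammaNat (n + 1) - log b) * (u ^ n * exp (-u)) +
        u ^ n * log u * exp (-u)) := by
    intro u (hu : 0 < u)
    simp_rw [exp_neg_sub_div_div_eq, mul_left_comm _ (exp (-u) / u)]
    rw [integral_const_mul, integral_pow_mul_log_mul_exp_neg_mul n (div_pos hb hu),
      log_div hb.ne' hu.ne', div_pow]
    field_simp
    ring
  rw [setIntegral_congr_fun measurableSet_Ioi hbessel, integral_const_mul,
    integral_integral_swap (integrable_pow_mul_log_mul_exp_neg_sub_div_div n hb),
    setIntegral_congr_fun measurableSet_Ioi hinner, integral_const_mul,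
    integral_add ((integrableOn_pow_mul_exp_neg n).const_mul _)
      (integrableOn_pow_mul_log_mul_exp_neg n),
    integral_const_mul, integral_pow_mul_exp_neg, integral_pow_mul_log_mul_exp_neg]
  field_simp
  ring
end

section
/- Fix γ̄ > 0, Ω > 0 and positive integer N, and define g(τ) = ((1-τ)/ln 2)·[2ψ(N) + ln γ̄ + 2 ln Ω - ln((1-τ)/τ)] on (0,1). If γ̄Ω² e^{2ψ(N)} > 1, then g attains its maximum on (0,1) at the unique point τ* = 1/(1 + W(γ̄Ω² e^{2ψ(N)-1})), where W is the principal Lambert W function. -/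
open Real Set

/-!
Write `c = 2ψ(N) + ln γ̄ + 2 ln Ω` and `w = W(γ̄Ω²e^{2ψ(N)-1})`, so that `w + ln w = c - 1`, i.e.
`c = 1 + w + ln w`. With `t = wτ/(1-τ)` one has the identity
`w - (1-τ)(c - ln((1-τ)/τ)) = (1-τ)(t - 1 - ln t)`,
and `ln t ≤ t - 1`, with equality only at `t = 1`, i.e. at `τ = 1/(1+w)`.
-/

/-- `(ln 2)·g(τ)` once the constant `2ψ(N) + ln γ̄ + 2 ln Ω` is written as `1 + w + ln w`. -/
noncomputable def scaledThroughput (w τ : ℝ) : ℝ :=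
  (1 - τ) * (1 + w + log w - log ((1 - τ) / τ))

namespace scaledThroughput

variable {w τ : ℝ}

theorem sub_eq_mul_sub_log (hw : 0 < w) (hτ : τ ∈ Ioo (0 : ℝ) 1) :
    w - scaledThroughput w τ =
      (1 - τ) * (w * τ / (1 - τ) - 1 - log (w * τ / (1 - τ))) := by
  obtain ⟨hτ0, hτ1⟩ := hτ
  have h1τ : 0 < 1 - τ := sub_pos.mpr hτ1
  have hlog : log (w * τ / (1 - τ)) = log w - log ((1 - τ) / τ) := by
    rw [← log_div hw.ne' (div_pos h1τ hτ0).ne', div_div_eq_mul_div]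
  rw [scaledThroughput, hlog]
  field_simp
  ring

theorem le (hw : 0 < w) (hτ : τ ∈ Ioo (0 : ℝ) 1) : scaledThroughput w τ ≤ w := by
  have h1τ : 0 < 1 - τ := sub_pos.mpr hτ.2
  have ht : 0 < w * τ / (1 - τ) := div_pos (mul_pos hw hτ.1) h1τ
  have := mul_nonneg h1τ.le (sub_nonneg.mpr (log_le_sub_one_of_pos ht))
  linarith [sub_eq_mul_sub_log hw hτ]

theorem lt (hw : 0 < w) (hτ : τ ∈ Ioo (0 : ℝ) 1) (hne : τ ≠ 1 / (1 + w)) :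
    scaledThroughput w τ < w := by
  have h1τ : 0 < 1 - τ := sub_pos.mpr hτ.2
  have ht : 0 < w * τ / (1 - τ) := div_pos (mul_pos hw hτ.1) h1τ
  have ht1 : w * τ / (1 - τ) ≠ 1 := by
    contrapose! hne
    field_simp at hne ⊢
    linarith
  have := mul_pos h1τ (sub_pos.mpr (log_lt_sub_one_of_pos ht ht1))
  linarith [sub_eq_mul_sub_log hw hτ]

theorem apply_one_div_one_add (hw : 0 < w) : scaledThroughput w (1 / (1 + w)) = w := by
  have hratio : (1 - 1 / (1 + w)) / (1 / (1 + w)) = w := by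
    field_simp
    ring
  rw [scaledThroughput, hratio, add_sub_cancel_right]
  field_simp
  ring

end scaledThroughput

theorem one_div_one_add_mem_Ioo {w : ℝ} (hw : 0 < w) : 1 / (1 + w) ∈ Ioo (0 : ℝ) 1 :=
  ⟨by positivity, (div_lt_one (by positivity)).mpr (by linarith)⟩

theorem stmt12_general (γbar Ω : ℝ) (hγbar : 0 < γbar) (hΩ : 0 < Ω) (N : ℕ)
    (W : ℝ → ℝ)
    (hW : ∀ x ≥ (0:ℝ), W x * Real.exp (W x) = x)
    (g : ℝ → ℝ)
    (hg : ∀ τ, g τ = (1 - τ) / Real.log 2 *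
      (2 * digammaNat N + Real.log γbar + 2 * Real.log Ω - Real.log ((1 - τ) / τ))) :
    let τs : ℝ := 1 / (1 + W (γbar * Ω ^ 2 * Real.exp (2 * digammaNat N - 1)))
    τs ∈ Ioo (0:ℝ) 1 ∧
    (∀ τ ∈ Ioo (0:ℝ) 1, g τ ≤ g τs) ∧
    (∀ τ ∈ Ioo (0:ℝ) 1, τ ≠ τs → g τ < g τs) := by
  intro τs
  set x := γbar * Ω ^ 2 * exp (2 * digammaNat N - 1)
  have hx : 0 < x := by positivity
  set w := W x
  have hwx : w * exp w = x := hW x hx.le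
  have hw : 0 < w := pos_of_mul_pos_left (hwx ▸ hx) (exp_pos w).le
  have hc : 2 * digammaNat N + log γbar + 2 * log Ω = 1 + w + log w := by
    have hlog := congrArg log hwx
    rw [log_mul hw.ne' (exp_pos w).ne', log_exp, log_mul (by positivity) (exp_pos _).ne',
      log_mul hγbar.ne' (by positivity), log_pow, log_exp] at hlog
    push_cast at hlog
    linarith
  have hg' : ∀ τ, g τ = scaledThroughput w τ / log 2 := fun τ => by
    rw [hg, hc, scaledThroughput]
    ring
  have hlog2 : 0 < log 2 := log_pos one_lt_two
  refine ⟨one_div_one_add_mem_Ioo hw, fun τ hτ => ?_, fun τ hτ hne => ?_⟩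
  · rw [hg', hg', scaledThroughput.apply_one_div_one_add hw]
    exact div_le_div_of_nonneg_right (scaledThroughput.le hw hτ) hlog2.le
  · rw [hg', hg', scaledThroughput.apply_one_div_one_add hw]
    exact div_lt_div_of_pos_right (scaledThroughput.lt hw hτ hne) hlog2

/-- If `γ̄Ω²e^{2ψ(N)} > 1`, then the asymptotic delay-tolerant throughput
`g(τ) = ((1-τ)/ln 2)[2ψ(N) + ln γ̄ + 2 ln Ω - ln((1-τ)/τ)]` attains its maximum on `(0,1)`
at the unique point `τ* = 1/(1 + W(γ̄Ω²e^{2ψ(N)-1}))`. -/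
theorem stmt12 (γbar Ω : ℝ) (hγbar : 0 < γbar) (hΩ : 0 < Ω) (N : ℕ) (hN : 1 ≤ N)
    (W : ℝ → ℝ)
    (hW : ∀ x ≥ (0:ℝ), W x * Real.exp (W x) = x)
    (hW0 : ∀ x ≥ (0:ℝ), 0 ≤ W x)
    (hcond : 1 < γbar * Ω ^ 2 * Real.exp (2 * digammaNat N))
    (g : ℝ → ℝ)
    (hg : ∀ τ, g τ = (1 - τ) / Real.log 2 *
      (2 * digammaNat N + Real.log γbar + 2 * Real.log Ω - Real.log ((1 - τ) / τ))) :
    let τs : ℝ := 1 / (1 + W (γbar * Ω ^ 2 * Real.exp (2 * digammaNat N - 1)))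
    τs ∈ Ioo (0:ℝ) 1 ∧
    (∀ τ ∈ Ioo (0:ℝ) 1, g τ ≤ g τs) ∧
    (∀ τ ∈ Ioo (0:ℝ) 1, τ ≠ τs → g τ < g τs) :=
  stmt12_general γbar Ω hγbar hΩ N W hW g hg
end
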